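/- arXiv:2112.06517 — 5 statements merged into one kernel-verified Lean document; each statement's English description precedes it below -/
import Mathlib

section
/- Let g : ℝ → ℝ be a differentiable surjection with g′(x) ≥ c > 0 for all x ∈ ℝ, and let g⁻¹ denote its inverse. Let J be a positive integer, α, w ∈ ℝ^J with ∑_{j=1}^J w_j α_j = 1, let r ∈ ℝ, and let ε ∈ ℝ^J. Then | ∑_{j=1}^J w_j · g⁻¹( g(α_j r) + ε_j ) − r | ≤ (1/c) · ∑_{j=1}^J |w_j| · |ε_j|. -/
/-!
Since `g' ≥ c`, the inverse `g⁻¹` is `(1/c)`-Lipschitz, so `g⁻¹(g(α_j r) + ε_j)` lies within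
`|ε_j| / c` of `α_j r`. The normalization `∑ w_j α_j = 1` writes `r` as `∑ w_j α_j r`, and the
triangle inequality sums the per-evaluator errors.
-/

open Finset

section DerivLowerBound

variable {g : ℝ → ℝ} {c : ℝ}

lemma mul_sub_le_sub_of_le_deriv (hg : Differentiable ℝ g) (hderiv : ∀ x, c ≤ deriv g x)
    {a b : ℝ} (hab : a ≤ b) : c * (b - a) ≤ g b - g a := by
  simpa using convex_univ.mul_sub_le_image_sub_of_le_deriv hg.continuous.continuousOn
    (fun x _ => (hg x).differentiableWithinAt) (fun x _ => hderiv x) a trivial b trivial hab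

lemma mul_abs_sub_le_abs_sub_of_le_deriv (hg : Differentiable ℝ g)
    (hderiv : ∀ x, c ≤ deriv g x) (a b : ℝ) : c * |b - a| ≤ |g b - g a| := by
  rcases le_total a b with hab | hba
  · rw [abs_of_nonneg (sub_nonneg.2 hab)]
    exact (mul_sub_le_sub_of_le_deriv hg hderiv hab).trans (le_abs_self _)
  · rw [abs_sub_comm, abs_of_nonneg (sub_nonneg.2 hba), abs_sub_comm]
    exact (mul_sub_le_sub_of_le_deriv hg hderiv hba).trans (le_abs_self _)

lemma abs_invFun_add_sub_le (hc : 0 < c) (hg : Differentiable ℝ g)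
    (hsurj : Function.Surjective g) (hderiv : ∀ x, c ≤ deriv g x) (x e : ℝ) :
    |Function.invFun g (g x + e) - x| ≤ |e| / c := by
  have h := mul_abs_sub_le_abs_sub_of_le_deriv hg hderiv x (Function.invFun g (g x + e))
  rw [Function.rightInverse_invFun hsurj (g x + e), add_sub_cancel_left] at h
  rwa [le_div_iff₀ hc, mul_comm]

end DerivLowerBound

lemma abs_sum_mul_sub_le_of_sum_mul_eq_one {ι : Type*} [Fintype ι] (α w y δ : ι → ℝ)
    (hw : ∑ j, w j * α j = 1) (r : ℝ) (hy : ∀ j, |y j - α j * r| ≤ δ j) :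
    |∑ j, w j * y j - r| ≤ ∑ j, |w j| * δ j := by
  have hr : ∑ j, w j * (α j * r) = r := by
    simp_rw [← mul_assoc, ← sum_mul, hw, one_mul]
  calc |∑ j, w j * y j - r| = |∑ j, w j * (y j - α j * r)| := by
        simp only [mul_sub, sum_sub_distrib, hr]
    _ ≤ ∑ j, |w j * (y j - α j * r)| := abs_sum_le_sum_abs _ _
    _ ≤ ∑ j, |w j| * δ j := sum_le_sum fun j _ => by
        rw [abs_mul]
        exact mul_le_mul_of_nonneg_left (hy j) (abs_nonneg _)

theorem stmt_4_general (g : ℝ → ℝ) (c : ℝ) (hc : 0 < c)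
    (hg : Differentiable ℝ g) (hsurj : Function.Surjective g)
    (hderiv : ∀ x, c ≤ deriv g x)
    (J : ℕ) (α w : Fin J → ℝ)
    (hw : (∑ j, w j * α j) = 1)
    (r : ℝ) (ε : Fin J → ℝ) :
    |(∑ j, w j * Function.invFun g (g (α j * r) + ε j)) - r| ≤
      (1 / c) * ∑ j, |w j| * |ε j| := by
  calc _ ≤ ∑ j, |w j| * (|ε j| / c) :=
        abs_sum_mul_sub_le_of_sum_mul_eq_one α w _ _ hw r
          fun j => abs_invFun_add_sub_le hc hg hsurj hderiv _ _
    _ = (1 / c) * ∑ j, |w j| * |ε j| := by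
        rw [mul_sum]
        exact sum_congr rfl fun j _ => by ring

/-- Deterministic per-arm error bound in the generalized linear evaluation model:
if `∑ w_j α_j = 1` then the oracle estimate `∑ w_j g⁻¹(g(α_j r) + ε_j)` deviates
from the true reward `r` by at most `(1/c) ∑ |w_j||ε_j|`. -/
theorem stmt_4 (g : ℝ → ℝ) (c : ℝ) (hc : 0 < c)
    (hg : Differentiable ℝ g) (hsurj : Function.Surjective g)
    (hderiv : ∀ x, c ≤ deriv g x)
    (J : ℕ) (hJ : 0 < J) (α w : Fin J → ℝ)
    (hw : (∑ j, w j * α j) = 1)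
    (r : ℝ) (ε : Fin J → ℝ) :
    |(∑ j, w j * Function.invFun g (g (α j * r) + ε j)) - r| ≤
      (1 / c) * ∑ j, |w j| * |ε j| :=
  stmt_4_general g c hc hg hsurj hderiv J α w hw r ε
end

section
/- Let n > K ≥ 1 be integers, C > 0, and let r_1, …, r_n ∈ [0, C] be fixed rewards. Let J ≥ 1, α ∈ ℝ^J with α ≠ 0, σ ∈ ℝ^J with σ_j > 0, and let (ε_{i,j})_{i≤n, j≤J} be a jointly independent family of real random variables, each ε_{i,j} having mean zero and E[exp(t ε_{i,j})] ≤ exp(σ_j² t²/2) for all t ∈ ℝ. Define evaluations f_{i,j} = α_j r_i + ε_{i,j}, weights w⁺_j = (α_j/σ_j²)/‖α·σ⁻¹‖², and estimated rewards r̂_i = ∑_{j=1}^J w⁺_j f_{i,j}. Let A⋆ be a K-element subset of {1,…,n} maximizing ∑_{i∈A} r_i. Then for any δ ∈ (0,1), with probability at least 1 − δ, every K-element subset A⁺ of {1,…,n} maximizing ∑_{i∈A} r̂_i satisfies ∑_{i∈A⋆} r_i − ∑_{i∈A⁺} r_i ≤ (2K/‖α·σ⁻¹‖) · √(2 ln(2n/δ)).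 -/
/-!
On the event that every estimation error `r̂ᵢ - rᵢ` is at most `t` in absolute value,
a set `A⁺` maximizing `∑ r̂` loses at most `2Kt` against `A⋆`: passing from `r` to `r̂`
can only underestimate `A⋆` and overestimate `A⁺`, by at most `Kt` each.
Since `∑ⱼ w⁺ⱼ αⱼ = 1`, the error of arm `i` is `∑ⱼ w⁺ⱼ εᵢⱼ`, a sum of independent
sub-Gaussians with variance proxy `∑ⱼ (w⁺ⱼ)² σⱼ² = ‖α·σ⁻¹‖⁻²`. A Chernoff bound on both
tails of all `n` errors, with `t = √(2 log (2n/δ)) / ‖α·σ⁻¹‖`, shows that the event fails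
with probability at most `δ`.
-/

open Finset MeasureTheory ProbabilityTheory Real
open scoped NNReal

namespace ProbabilityTheory.HasSubgaussianMGF

variable {Ω : Type*} {mΩ : MeasurableSpace Ω} {μ : Measure Ω}

lemma measureReal_abs_ge_le [IsFiniteMeasure μ] {X : Ω → ℝ} {c : ℝ≥0}
    (h : HasSubgaussianMGF X c μ) {ε : ℝ} (hε : 0 ≤ ε) :
    μ.real {ω | ε ≤ |X ω|} ≤ 2 * exp (-ε ^ 2 / (2 * c)) := by
  have hsplit : {ω | ε ≤ |X ω|} = {ω | ε ≤ X ω} ∪ {ω | ε ≤ (-X) ω} := by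
    ext ω
    simp [le_abs]
  rw [hsplit, two_mul]
  exact (measureReal_union_le _ _).trans
    (add_le_add (h.measure_ge_le hε) (h.neg.measure_ge_le hε))

lemma sum_mul_of_iIndepFun {ι : Type*} {X : ι → Ω → ℝ} (h_indep : iIndepFun X μ)
    {c : ι → ℝ≥0} (h : ∀ i, HasSubgaussianMGF (X i) (c i) μ) (w : ι → ℝ) (s : Finset ι) :
    HasSubgaussianMGF (fun ω ↦ ∑ i ∈ s, w i * X i ω)
      (∑ i ∈ s, ⟨w i ^ 2, sq_nonneg _⟩ * c i) μ :=
  sum_of_iIndepFun (h_indep.comp (fun i x ↦ w i * x) fun i ↦ measurable_const_mul (w i))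
    fun i _ ↦ (h i).const_mul (w i)

lemma ofReal_one_sub_le_measure_forall_abs_le [IsProbabilityMeasure μ]
    {ι : Type*} [Fintype ι]
    {X : ι → Ω → ℝ} {c : ℝ≥0} (hc : 0 < c) (h : ∀ i, HasSubgaussianMGF (X i) c μ)
    {δ : ℝ} (hδ0 : 0 < δ) (hδ2 : δ ≤ 2) :
    ENNReal.ofReal (1 - δ) ≤
      μ {ω | ∀ i, |X i ω| ≤ √(2 * c * log (2 * Fintype.card ι / δ))} := by
  rcases isEmpty_or_nonempty ι with hι | hι
  · simpa using ENNReal.ofReal_le_one.mpr (by linarith : 1 - δ ≤ 1)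
  set n : ℝ := (Fintype.card ι : ℝ)
  set ε := √(2 * c * log (2 * n / δ))
  have hn : 1 ≤ n := Nat.one_le_cast.mpr Fintype.card_pos
  have hlog : 0 ≤ log (2 * n / δ) := log_nonneg <| by rw [le_div_iff₀ hδ0]; linarith
  have hexponent : -ε ^ 2 / (2 * c) = -log (2 * n / δ) := by
    rw [sq_sqrt (by positivity)]
    field_simp
  have htail : ∀ i, μ.real {ω | ε < |X i ω|} ≤ δ / n := fun i ↦ calc
    μ.real {ω | ε < |X i ω|} ≤ μ.real {ω | ε ≤ |X i ω|} :=
        measureReal_mono <| Set.ofPred_subset_ofPred.2 fun _ ↦ le_of_lt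
    _ ≤ 2 * exp (-ε ^ 2 / (2 * c)) := (h i).measureReal_abs_ge_le (sqrt_nonneg _)
    _ = δ / n := by
      rw [hexponent, exp_neg, exp_log (by positivity)]
      field_simp
  have hbad : μ.real {ω | ∀ i, |X i ω| ≤ ε}ᶜ ≤ δ := calc
    _ = μ.real (⋃ i, {ω | ε < |X i ω|}) := by congr 1; ext ω; simp
    _ ≤ ∑ i, μ.real {ω | ε < |X i ω|} := measureReal_iUnion_fintype_le _
    _ ≤ ∑ _ : ι, δ / n := sum_le_sum fun i _ ↦ htail i
    _ = δ := by
      rw [sum_const, card_univ, nsmul_eq_mul]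
      exact mul_div_cancel₀ δ (by positivity)
  have hcover : 1 ≤ μ.real {ω | ∀ i, |X i ω| ≤ ε} + μ.real {ω | ∀ i, |X i ω| ≤ ε}ᶜ := by
    simpa using measureReal_union_le (μ := μ) {ω | ∀ i, |X i ω| ≤ ε} {ω | ∀ i, |X i ω| ≤ ε}ᶜ
  rw [← ofReal_measureReal]
  exact ENNReal.ofReal_le_ofReal (by linarith)

end ProbabilityTheory.HasSubgaussianMGF

lemma Finset.sum_sub_sum_le_of_abs_sub_le {ι : Type*} {r r' : ι → ℝ} {t : ℝ}
    (h : ∀ i, |r' i - r i| ≤ t) {A B : Finset ι} (hAB : ∑ i ∈ A, r' i ≤ ∑ i ∈ B, r' i) :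
    ∑ i ∈ A, r i - ∑ i ∈ B, r i ≤ (#A + #B) * t := by
  have hA : ∑ i ∈ A, r i ≤ ∑ i ∈ A, r' i + #A * t := by
    rw [← nsmul_eq_mul, ← sum_const, ← sum_add_distrib]
    exact sum_le_sum fun i _ ↦ by linarith [(abs_le.mp (h i)).1]
  have hB : ∑ i ∈ B, r' i ≤ ∑ i ∈ B, r i + #B * t := by
    rw [← nsmul_eq_mul, ← sum_const, ← sum_add_distrib]
    exact sum_le_sum fun i _ ↦ by linarith [(abs_le.mp (h i)).2]
  linarith

section OracleWeight

variable {ι : Type*} [Fintype ι] (α σ : ι → ℝ)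

/-- The oracle weights `w⁺ⱼ = (αⱼ / σⱼ²) / ‖α·σ⁻¹‖²`. -/
noncomputable def oracleWeight (j : ι) : ℝ := α j / σ j ^ 2 / ∑ k, α k ^ 2 / σ k ^ 2

variable {α σ}

lemma sum_sq_div_sq_pos (hα : α ≠ 0) (hσ : ∀ j, σ j ≠ 0) : 0 < ∑ k, α k ^ 2 / σ k ^ 2 := by
  obtain ⟨j, hj⟩ := Function.ne_iff.mp hα
  exact sum_pos' (fun k _ ↦ by positivity)
    ⟨j, mem_univ j, div_pos (sq_pos_of_ne_zero hj) (sq_pos_of_ne_zero (hσ j))⟩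

lemma sum_oracleWeight_mul_self (hS : ∑ k, α k ^ 2 / σ k ^ 2 ≠ 0) :
    ∑ j, oracleWeight α σ j * α j = 1 := by
  calc ∑ j, oracleWeight α σ j * α j
        = ∑ j, α j ^ 2 / σ j ^ 2 / ∑ k, α k ^ 2 / σ k ^ 2 :=
        sum_congr rfl fun j _ ↦ by simp only [oracleWeight]; ring
    _ = 1 := by rw [← sum_div, div_self hS]

lemma sum_oracleWeight_sq_mul_sq (hS : ∑ k, α k ^ 2 / σ k ^ 2 ≠ 0) :
    ∑ j, oracleWeight α σ j ^ 2 * σ j ^ 2 = (∑ k, α k ^ 2 / σ k ^ 2)⁻¹ := by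
  calc ∑ j, oracleWeight α σ j ^ 2 * σ j ^ 2
        = ∑ j, α j ^ 2 / σ j ^ 2 / (∑ k, α k ^ 2 / σ k ^ 2) ^ 2 := by
        refine sum_congr rfl fun j _ ↦ ?_
        rcases eq_or_ne (σ j) 0 with hσ | hσ
        · simp [hσ] -- both sides are `0`, by `x / 0 = 0`
        · simp only [oracleWeight]
          field_simp
    _ = (∑ k, α k ^ 2 / σ k ^ 2)⁻¹ := by rw [← sum_div, sq, div_mul_cancel_left₀ hS]

lemma hasSubgaussianMGF_sum_oracleWeight_mul {Ω : Type*} {mΩ : MeasurableSpace Ω}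
    {μ : Measure Ω} {ε : ι → Ω → ℝ} (hindep : iIndepFun ε μ)
    (hε : ∀ j, HasSubgaussianMGF (ε j) ⟨σ j ^ 2, sq_nonneg _⟩ μ)
    (hS : 0 < ∑ k, α k ^ 2 / σ k ^ 2) :
    HasSubgaussianMGF (fun ω ↦ ∑ j, oracleWeight α σ j * ε j ω)
      ⟨(∑ k, α k ^ 2 / σ k ^ 2)⁻¹, (inv_pos.mpr hS).le⟩ μ := by
  have hproxy : ∑ j, (⟨oracleWeight α σ j ^ 2, sq_nonneg _⟩ * ⟨σ j ^ 2, sq_nonneg _⟩ : ℝ≥0) =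
      ⟨(∑ k, α k ^ 2 / σ k ^ 2)⁻¹, (inv_pos.mpr hS).le⟩ :=
    NNReal.eq <| by push_cast; exact sum_oracleWeight_sq_mul_sq hS.ne'
  exact hproxy ▸ HasSubgaussianMGF.sum_mul_of_iIndepFun hindep hε (oracleWeight α σ) univ

end OracleWeight

theorem stmt_6_general {Ω : Type*} [MeasurableSpace Ω] (μ : Measure Ω)
    [IsProbabilityMeasure μ]
    (n K : ℕ) (r : Fin n → ℝ)
    (J : ℕ) (α σ : Fin J → ℝ) (hα : α ≠ 0) (hσ : ∀ j, 0 < σ j)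
    (ε : Fin n → Fin J → Ω → ℝ)
    (hindep : iIndepFun (fun (p : Fin n × Fin J) => ε p.1 p.2) μ)
    (hint : ∀ i j (t : ℝ), Integrable (fun ω => Real.exp (t * ε i j ω)) μ)
    (hmgf : ∀ i j (t : ℝ),
      ∫ ω, Real.exp (t * ε i j ω) ∂μ ≤ Real.exp ((σ j) ^ 2 * t ^ 2 / 2))
    (f : Fin n → Fin J → Ω → ℝ)
    (hf : ∀ i j ω, f i j ω = α j * r i + ε i j ω)
    (wplus : Fin J → ℝ)
    (hwplus : ∀ j, wplus j = (α j / (σ j) ^ 2) / ∑ k, (α k) ^ 2 / (σ k) ^ 2)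
    (rhat : Fin n → Ω → ℝ)
    (hrhat : ∀ i ω, rhat i ω = ∑ j, wplus j * f i j ω)
    (Astar : Finset (Fin n)) (hAstar_card : Astar.card = K)
    (δ : ℝ) (hδ : δ ∈ Set.Ioo (0 : ℝ) 1) :
    ENNReal.ofReal (1 - δ) ≤
      μ {ω | ∀ Aplus : Finset (Fin n), Aplus.card = K →
        (∀ A : Finset (Fin n), A.card = K →
          ∑ i ∈ A, rhat i ω ≤ ∑ i ∈ Aplus, rhat i ω) →
        ∑ i ∈ Astar, r i - ∑ i ∈ Aplus, r i ≤
          (2 * K / Real.sqrt (∑ j, (α j) ^ 2 / (σ j) ^ 2)) *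
            Real.sqrt (2 * Real.log (2 * n / δ))} := by
  obtain ⟨hδ0, hδ1⟩ := hδ
  obtain rfl : wplus = oracleWeight α σ := funext hwplus
  set S := ∑ k, α k ^ 2 / σ k ^ 2
  have hS : 0 < S := sum_sq_div_sq_pos hα fun j ↦ (hσ j).ne'
  have herror :
      ∀ i, (fun ω ↦ rhat i ω - r i) = fun ω ↦ ∑ j, oracleWeight α σ j * ε i j ω := by
    intro i
    funext ω
    simp only [hrhat, hf, mul_add, sum_add_distrib, ← mul_assoc, ← sum_mul,
      sum_oracleWeight_mul_self hS.ne', one_mul, add_sub_cancel_left]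
  have hsubG :
      ∀ i, HasSubgaussianMGF (fun ω ↦ rhat i ω - r i) ⟨S⁻¹, (inv_pos.mpr hS).le⟩ μ := by
    intro i
    rw [herror i]
    exact hasSubgaussianMGF_sum_oracleWeight_mul
      (hindep.precomp (g := fun j ↦ (i, j)) fun _ _ h ↦ (Prod.mk.inj h).2)
      (fun j ↦ ⟨hint i j, hmgf i j⟩) hS
  refine (HasSubgaussianMGF.ofReal_one_sub_le_measure_forall_abs_le
    (show (0 : ℝ≥0) < ⟨S⁻¹, _⟩ from inv_pos.mpr hS) hsubG hδ0 (by linarith)).trans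
    (measure_mono fun ω hω Aplus hcard hmax ↦ ?_)
  calc _ ≤ (#Astar + #Aplus) * √(2 * S⁻¹ * log (2 * Fintype.card (Fin n) / δ)) :=
        sum_sub_sum_le_of_abs_sub_le hω (hmax Astar hAstar_card)
    _ = _ := by
      rw [hAstar_card, hcard, Fintype.card_fin,
        show 2 * S⁻¹ * log (2 * n / δ) = 2 * log (2 * n / δ) / S by ring, sqrt_div' _ hS.le]
      ring

/-- Oracle suboptimality gap in the linear evaluation setting (Lemma 2):
with evaluations `f_{i,j} = α_j r_i + ε_{i,j}` and oracle weights
`w⁺_j = (α_j/σ_j²)/‖α·σ⁻¹‖²`, with probability at least `1 - δ` every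
K-element set maximizing the estimated rewards `r̂` has true reward within
`(2K/‖α·σ⁻¹‖)·√(2 ln(2n/δ))` of the best K-element set. -/
theorem stmt_6 {Ω : Type*} [MeasurableSpace Ω] (μ : Measure Ω)
    [IsProbabilityMeasure μ]
    (n K : ℕ) (hK : 1 ≤ K) (hnK : K < n)
    (C : ℝ) (hC : 0 < C) (r : Fin n → ℝ) (hr : ∀ i, r i ∈ Set.Icc 0 C)
    (J : ℕ) (hJ : 1 ≤ J) (α σ : Fin J → ℝ) (hα : α ≠ 0) (hσ : ∀ j, 0 < σ j)
    (ε : Fin n → Fin J → Ω → ℝ)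
    (hmeas : ∀ i j, Measurable (ε i j))
    (hindep : iIndepFun (fun (p : Fin n × Fin J) => ε p.1 p.2) μ)
    (hmean : ∀ i j, ∫ ω, ε i j ω ∂μ = 0)
    (hint : ∀ i j (t : ℝ), Integrable (fun ω => Real.exp (t * ε i j ω)) μ)
    (hmgf : ∀ i j (t : ℝ),
      ∫ ω, Real.exp (t * ε i j ω) ∂μ ≤ Real.exp ((σ j) ^ 2 * t ^ 2 / 2))
    (f : Fin n → Fin J → Ω → ℝ)
    (hf : ∀ i j ω, f i j ω = α j * r i + ε i j ω)
    (wplus : Fin J → ℝ)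
    (hwplus : ∀ j, wplus j = (α j / (σ j) ^ 2) / ∑ k, (α k) ^ 2 / (σ k) ^ 2)
    (rhat : Fin n → Ω → ℝ)
    (hrhat : ∀ i ω, rhat i ω = ∑ j, wplus j * f i j ω)
    (Astar : Finset (Fin n)) (hAstar_card : Astar.card = K)
    (hAstar_max : ∀ A : Finset (Fin n), A.card = K →
      ∑ i ∈ A, r i ≤ ∑ i ∈ Astar, r i)
    (δ : ℝ) (hδ : δ ∈ Set.Ioo (0 : ℝ) 1) :
    ENNReal.ofReal (1 - δ) ≤
      μ {ω | ∀ Aplus : Finset (Fin n), Aplus.card = K →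
        (∀ A : Finset (Fin n), A.card = K →
          ∑ i ∈ A, rhat i ω ≤ ∑ i ∈ Aplus, rhat i ω) →
        ∑ i ∈ Astar, r i - ∑ i ∈ Aplus, r i ≤
          (2 * K / Real.sqrt (∑ j, (α j) ^ 2 / (σ j) ^ 2)) *
            Real.sqrt (2 * Real.log (2 * n / δ))} :=
  stmt_6_general μ n K r J α σ hα hσ ε hindep hint hmgf f hf wplus hwplus rhat hrhat Astar
    hAstar_card δ hδ
end

section
/- Let J ≥ 1, let σ ∈ ℝ^J with σ_j > 0 for all j, let β ≥ 0, and let α, α̂ ∈ ℝ^J with α ≠ 0, ‖α̂ − α‖_∞ ≤ β and max_j |α_j| ≥ 8β. Then √( ∑_{j=1}^J (α̂_j − α_j)²/σ_j⁴ ) / ( ∑_{j=1}^J α̂_j²/σ_j² ) ≤ 4β · ( ∑_{j=1}^J 1/σ_j⁴ )^{1/2} / ( ∑_{j=1}^J (α_j²/σ_j²)·𝟙[|α_j| ≥ 8β] ). -/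
/-!
Each error coordinate is at most `β`, so the numerator is at most `β ‖σ⁻¹‖₄²`. On a coordinate
with `|α_j| ≥ 8β` we have `|α̂_j| ≥ |α_j| - β ≥ 7|α_j|/8`, hence `α̂_j² ≥ 49 α_j²/64 ≥ α_j²/2`, so the
denominator is at least half of the thresholded sum. Together they give the bound with the
constant `2β`, in particular `4β`. The thresholded sum is positive unless `β = 0`, in which case
the numerator vanishes.
-/

open Finset

theorem sq_le_two_mul_sq_of_abs_sub_le {a b β : ℝ} (hclose : |b - a| ≤ β) (hlarge : 8 * β ≤ |a|) :
    a ^ 2 ≤ 2 * b ^ 2 := by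
  have hb : 7 / 8 * |a| ≤ |b| := by
    linarith [abs_sub_abs_le_abs_sub a b, abs_sub_comm a b]
  have ha : 0 ≤ |a| := abs_nonneg a
  nlinarith [sq_abs a, sq_abs b]

section WeightedSums

variable {ι : Type*} [Fintype ι]

theorem sqrt_sum_sq_div_le {x c : ι → ℝ} {β : ℝ} (hβ : 0 ≤ β) (hc : ∀ i, 0 ≤ c i)
    (hx : ∀ i, |x i| ≤ β) :
    Real.sqrt (∑ i, x i ^ 2 / c i) ≤ β * Real.sqrt (∑ i, 1 / c i) := by
  have hsum : ∑ i, x i ^ 2 / c i ≤ β ^ 2 * ∑ i, 1 / c i := by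
    rw [mul_sum]
    refine sum_le_sum fun i _ ↦ ?_
    rw [mul_one_div]
    exact div_le_div_of_nonneg_right (sq_le_sq' (abs_le.mp (hx i)).1 (abs_le.mp (hx i)).2) (hc i)
  calc Real.sqrt (∑ i, x i ^ 2 / c i) ≤ Real.sqrt (β ^ 2 * ∑ i, 1 / c i) :=
        Real.sqrt_le_sqrt hsum
    _ = β * Real.sqrt (∑ i, 1 / c i) := by
        rw [Real.sqrt_mul (sq_nonneg β), Real.sqrt_sq hβ]

theorem sum_sq_div_mul_indicator_le {a b c : ι → ℝ} {β : ℝ} (hc : ∀ i, 0 ≤ c i)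
    (hclose : ∀ i, |b i - a i| ≤ β) :
    ∑ i, a i ^ 2 / c i * (if 8 * β ≤ |a i| then 1 else 0) ≤ 2 * ∑ i, b i ^ 2 / c i := by
  rw [mul_sum]
  refine sum_le_sum fun i _ ↦ ?_
  split_ifs with hlarge
  · rw [mul_one, ← mul_div_assoc]
    gcongr
    · exact hc i
    · exact sq_le_two_mul_sq_of_abs_sub_le (hclose i) hlarge
  · rw [mul_zero]
    have := hc i
    positivity

end WeightedSums

theorem stmt_10_general (J : ℕ) (σ : Fin J → ℝ) (hσ : ∀ j, 0 < σ j)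
    (β : ℝ) (hβ : 0 ≤ β) (α αhat : Fin J → ℝ)
    (hclose : ∀ j, |αhat j - α j| ≤ β)
    (hmax : ∃ j, 8 * β ≤ |α j|) :
    Real.sqrt (∑ j, (αhat j - α j) ^ 2 / (σ j) ^ 4) /
        (∑ j, (αhat j) ^ 2 / (σ j) ^ 2) ≤
      4 * β * Real.sqrt (∑ j, 1 / (σ j) ^ 4) /
        (∑ j, ((α j) ^ 2 / (σ j) ^ 2) * (if 8 * β ≤ |α j| then 1 else 0)) := by
  set S := ∑ j, ((α j) ^ 2 / (σ j) ^ 2) * (if 8 * β ≤ |α j| then 1 else 0)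
  have hnum := sqrt_sum_sq_div_le hβ (fun j ↦ (pow_pos (hσ j) 4).le) hclose
  have hden : S ≤ 2 * ∑ j, (αhat j) ^ 2 / (σ j) ^ 2 :=
    sum_sq_div_mul_indicator_le (fun j ↦ (pow_pos (hσ j) 2).le) hclose
  obtain ⟨j, hj⟩ := hmax
  rcases eq_or_ne (α j) 0 with hαj | hαj
  · obtain rfl : β = 0 := by simp only [hαj, abs_zero] at hj; linarith
    rw [zero_mul] at hnum
    rw [mul_zero, zero_mul, zero_div, le_antisymm hnum (Real.sqrt_nonneg _), zero_div]
  have hS : 0 < S := by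
    refine sum_pos' (fun i _ ↦ ?_) ⟨j, mem_univ j, ?_⟩
    · have := hσ i
      positivity
    · have := hσ j
      rw [if_pos hj, mul_one]
      positivity
  have hT := Real.sqrt_nonneg (∑ j, 1 / (σ j) ^ 4)
  calc _ ≤ β * Real.sqrt (∑ j, 1 / (σ j) ^ 4) / (S / 2) :=
        div_le_div₀ (by positivity) hnum (by positivity) (by linarith)
    _ = 2 * β * Real.sqrt (∑ j, 1 / (σ j) ^ 4) / S := by field_simp
    _ ≤ _ := by gcongr; norm_num

/-- Proposition 2 in the regret analysis of GLM-ε-greedy: if `‖α̂ − α‖_∞ ≤ β`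
and `max_j |α_j| ≥ 8β`, then
`‖σ⁻²·(α̂−α)‖₂ / ⟨α̂, σ⁻²·α̂⟩ ≤ 4β ‖σ⁻¹‖₄² / ∑_j (α_j²/σ_j²)·𝟙[|α_j| ≥ 8β]`. -/
theorem stmt_10 (J : ℕ) (hJ : 1 ≤ J) (σ : Fin J → ℝ) (hσ : ∀ j, 0 < σ j)
    (β : ℝ) (hβ : 0 ≤ β) (α αhat : Fin J → ℝ) (hα : α ≠ 0)
    (hclose : ∀ j, |αhat j - α j| ≤ β)
    (hmax : ∃ j, 8 * β ≤ |α j|) :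
    Real.sqrt (∑ j, (αhat j - α j) ^ 2 / (σ j) ^ 4) /
        (∑ j, (αhat j) ^ 2 / (σ j) ^ 2) ≤
      4 * β * Real.sqrt (∑ j, 1 / (σ j) ^ 4) /
        (∑ j, ((α j) ^ 2 / (σ j) ^ 2) * (if 8 * β ≤ |α j| then 1 else 0)) :=
  stmt_10_general J σ hσ β hβ α αhat hclose hmax
end

section
/- Let N, J be positive integers, C > 0, α ∈ ℝ^J, σ ∈ ℝ^J with σ_j > 0, and δ ∈ (0,1). Let r_1, …, r_N be i.i.d. real random variables taking values in [0, C] with mean r̄, and let (ε_{i,j})_{i≤N, j≤J} be a jointly independent family of real random variables, independent of the rewards, each ε_{i,j} with mean zero and E[exp(t ε_{i,j})] ≤ exp(σ_j² t²/2) for all t ∈ ℝ. Define α̂ ∈ ℝ^J by α̂_j = (1/N) ∑_{i=1}^N (α_j r_i + ε_{i,j}). Then with probability at least 1 − δ, ‖α̂ − r̄·α‖₂ ≤ ( ‖α‖₂ · C · √(ln(4/δ)/2) + ‖σ‖₂ · √(2 ln(4J/δ)) ) / √N. -/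
/-!
Write `x` for the empirical mean of the centred rewards `r_i - r̄` and `y_j` for the empirical
mean of the noises `ε_{i,j}`, so that `α̂_j - r̄ α_j = α_j x + y_j`. By Hoeffding's lemma each
`r_i - r̄` is sub-Gaussian with parameter `(C/2)²`, so `x` and every `y_j` are means of `N`
independent sub-Gaussian variables, hence sub-Gaussian with the parameter divided by `N`. The
two-sided Chernoff bound then makes `|x|` exceed its threshold with probability at most `δ/2` and
each `|y_j|` exceed its threshold with probability at most `δ/(2J)`. Outside the union of these
`J + 1` events, the triangle inequality in `ℝ^J` gives the bound.
-/

open Finset MeasureTheory ProbabilityTheory Real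
open scoped NNReal

namespace ProbabilityTheory

variable {Ω ι : Type*} [MeasurableSpace Ω] {μ : Measure Ω}

namespace HasSubgaussianMGF

variable {X : Ω → ℝ} {c : ℝ≥0}

lemma measure_abs_ge_le [IsFiniteMeasure μ] (h : HasSubgaussianMGF X c μ) {ε : ℝ}
    (hε : 0 ≤ ε) : μ.real {ω | ε ≤ |X ω|} ≤ 2 * exp (-ε ^ 2 / (2 * c)) := by
  have hsplit : {ω | ε ≤ |X ω|} ⊆ {ω | ε ≤ X ω} ∪ {ω | ε ≤ (-X) ω} := by
    intro ω hω
    simpa only [Set.mem_union, Set.mem_ofPred_eq, Pi.neg_apply, le_abs] using hω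
  calc μ.real {ω | ε ≤ |X ω|}
      ≤ μ.real {ω | ε ≤ X ω} + μ.real {ω | ε ≤ (-X) ω} :=
        (measureReal_mono hsplit).trans (measureReal_union_le _ _)
    _ ≤ exp (-ε ^ 2 / (2 * c)) + exp (-ε ^ 2 / (2 * c)) :=
        add_le_add (h.measure_ge_le hε) (h.neg.measure_ge_le hε)
    _ = 2 * exp (-ε ^ 2 / (2 * c)) := by ring

lemma measure_abs_ge_le_of_log_le [IsFiniteMeasure μ] (h : HasSubgaussianMGF X c μ)
    (hc : 0 < c) {p ε : ℝ} (hp : 0 < p) (hε : 0 ≤ ε) (hεp : 2 * c * log (2 / p) ≤ ε ^ 2) :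
    μ.real {ω | ε ≤ |X ω|} ≤ p := by
  have hexp : exp (-ε ^ 2 / (2 * c)) ≤ p / 2 := by
    calc exp (-ε ^ 2 / (2 * c)) ≤ exp (-log (2 / p)) := by
          gcongr
          rw [neg_div, neg_le_neg_iff, le_div_iff₀ (by positivity)]
          linarith
      _ = p / 2 := by rw [exp_neg, exp_log (by positivity), inv_div]
  linarith [h.measure_abs_ge_le hε]

lemma average_of_iIndepFun [Fintype ι] {X : ι → Ω → ℝ} (h_indep : iIndepFun X μ)
    (h_subG : ∀ i, HasSubgaussianMGF (X i) c μ) :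
    HasSubgaussianMGF (fun ω ↦ (Fintype.card ι : ℝ)⁻¹ * ∑ i, X i ω)
      (c / Fintype.card ι) μ := by
  have h := (sum_of_iIndepFun h_indep (s := univ) fun i _ ↦ h_subG i).const_mul
    (Fintype.card ι : ℝ)⁻¹
  have hparam : (⟨(Fintype.card ι : ℝ)⁻¹ ^ 2, sq_nonneg _⟩ * ∑ _i : ι, c : ℝ≥0)
      = c / Fintype.card ι := by
    rw [← NNReal.coe_inj]
    change (Fintype.card ι : ℝ)⁻¹ ^ 2 * ((∑ _i : ι, c : ℝ≥0) : ℝ)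
      = ((c / Fintype.card ι : ℝ≥0) : ℝ)
    push_cast
    rw [sum_const, card_univ, nsmul_eq_mul]
    obtain hn | hn := eq_or_ne (Fintype.card ι : ℝ) 0
    · simp [hn]
    · field_simp
  rwa [hparam] at h

end HasSubgaussianMGF

variable [IsProbabilityMeasure μ] [Fintype ι] [Nonempty ι] {X : ι → Ω → ℝ} {p : ℝ}

lemma measure_abs_average_ge_le_of_iIndepFun (h_indep : iIndepFun X μ) {σ : ℝ}
    (hσ : 0 < σ) (h_subG : ∀ i, HasSubgaussianMGF (X i) (‖σ‖₊ ^ 2) μ) (hp : 0 < p) :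
    μ.real {ω | σ * √(2 * log (2 / p)) / √(Fintype.card ι) ≤
      |(Fintype.card ι : ℝ)⁻¹ * ∑ i, X i ω|} ≤ p := by
  have hn : (0 : ℝ) < Fintype.card ι := Nat.cast_pos.mpr Fintype.card_pos
  refine (HasSubgaussianMGF.average_of_iIndepFun h_indep h_subG).measure_abs_ge_le_of_log_le
    (div_pos (pow_pos (nnnorm_pos.mpr hσ.ne') 2) (by simpa using hn)) hp (by positivity) ?_
  rw [div_pow, mul_pow, sq_sqrt hn.le, sq_sqrt', le_div_iff₀ hn]
  simp only [NNReal.coe_div, NNReal.coe_pow, coe_nnnorm, Real.norm_eq_abs, sq_abs,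
    NNReal.coe_natCast]
  field_simp
  nlinarith [le_max_left (2 * log (2 / p)) 0, sq_nonneg σ]

lemma measure_abs_average_sub_ge_le_of_mem_Icc (h_indep : iIndepFun X μ)
    (h_meas : ∀ i, AEMeasurable (X i) μ) {a b m : ℝ} (hab : a < b)
    (h_bdd : ∀ i, ∀ᵐ ω ∂μ, X i ω ∈ Set.Icc a b) (h_mean : ∀ i, μ[X i] = m) (hp : 0 < p) :
    μ.real {ω | (b - a) * √(log (2 / p) / 2) / √(Fintype.card ι) ≤
      |(Fintype.card ι : ℝ)⁻¹ * ∑ i, (X i ω - m)|} ≤ p := by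
  have h_subG (i : ι) : HasSubgaussianMGF (fun ω ↦ X i ω - m) (‖(b - a) / 2‖₊ ^ 2) μ := by
    rw [nnnorm_div, ← h_mean i]
    simpa using hasSubgaussianMGF_of_mem_Icc (h_meas i) (h_bdd i)
  have h := measure_abs_average_ge_le_of_iIndepFun
    (h_indep.comp (fun _ x ↦ x - m) fun _ ↦ measurable_id.sub_const m)
    (div_pos (sub_pos.mpr hab) two_pos) h_subG hp
  have hthreshold : (b - a) / 2 * √(2 * log (2 / p)) = (b - a) * √(log (2 / p) / 2) := by
    rw [show log (2 / p) / 2 = 2 * log (2 / p) / 2 ^ 2 by ring, sqrt_div' _ (by positivity),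
      sqrt_sq zero_le_two]
    ring
  simpa only [hthreshold, Function.comp_apply] using h

end ProbabilityTheory

lemma sqrt_sum_sq_mul_add_le {ι : Type*} [Fintype ι] (a s y : ι → ℝ) {x B K : ℝ} (hx : |x| ≤ B)
    (hK : 0 ≤ K) (hy : ∀ j, |y j| ≤ s j * K) :
    √(∑ j, (a j * x + y j) ^ 2) ≤ √(∑ j, a j ^ 2) * B + √(∑ j, s j ^ 2) * K := by
  have hnorm (v : ι → ℝ) : √(∑ j, v j ^ 2) = ‖WithLp.toLp 2 v‖ := by
    simp [EuclideanSpace.norm_eq]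
  have hy' : √(∑ j, y j ^ 2) ≤ √(∑ j, s j ^ 2) * K := by
    rw [← sqrt_sq hK, ← sqrt_mul (sum_nonneg fun j _ ↦ sq_nonneg _), sum_mul]
    refine sqrt_le_sqrt (sum_le_sum fun j _ ↦ ?_)
    rw [← mul_pow]
    exact sq_le_sq' (neg_le_of_abs_le (hy j)) (le_of_abs_le (hy j))
  calc √(∑ j, (a j * x + y j) ^ 2) = ‖x • WithLp.toLp 2 a + WithLp.toLp 2 y‖ := by
        rw [← hnorm]; simp [mul_comm]
    _ ≤ |x| * √(∑ j, a j ^ 2) + √(∑ j, y j ^ 2) := by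
        rw [hnorm, hnorm, ← Real.norm_eq_abs, ← norm_smul]; exact norm_add_le _ _
    _ ≤ √(∑ j, a j ^ 2) * B + √(∑ j, s j ^ 2) * K := by
        rw [mul_comm]; gcongr

lemma average_mul_add_sub_eq {ι : Type*} [Fintype ι] [Nonempty ι] (a m : ℝ) (u v : ι → ℝ) :
    (1 / Fintype.card ι : ℝ) * ∑ i, (a * u i + v i) - m * a
      = a * ((Fintype.card ι : ℝ)⁻¹ * ∑ i, (u i - m)) + (Fintype.card ι : ℝ)⁻¹ * ∑ i, v i := by
  have hn : (Fintype.card ι : ℝ) ≠ 0 := Nat.cast_ne_zero.mpr Fintype.card_ne_zero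
  simp only [sum_add_distrib, sum_sub_distrib, ← mul_sum, sum_const, card_univ, nsmul_eq_mul]
  field_simp
  ring

namespace MeasureTheory

variable {Ω : Type*} [MeasurableSpace Ω] {μ : Measure Ω} [IsProbabilityMeasure μ] {s : Set Ω}
  {δ : ℝ}

lemma ofReal_one_sub_le_of_measureReal_compl_le (h : μ.real sᶜ ≤ δ) :
    ENNReal.ofReal (1 - δ) ≤ μ s := by
  refine ENNReal.ofReal_le_of_le_toReal ?_
  have := measureReal_union_le (μ := μ) s sᶜ
  rw [Set.union_compl_self, probReal_univ] at this
  change 1 - δ ≤ μ.real s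
  linarith

lemma ofReal_one_sub_le_of_forall_notMem {ι : Type*} [Fintype ι] {A : Set Ω} {E : ι → Set Ω}
    (hδ : 0 ≤ δ) (hA : μ.real A ≤ δ / 2) (hE : ∀ j, μ.real (E j) ≤ δ / (2 * Fintype.card ι))
    (hs : ∀ ω, ω ∉ A → (∀ j, ω ∉ E j) → ω ∈ s) :
    ENNReal.ofReal (1 - δ) ≤ μ s := by
  refine ofReal_one_sub_le_of_measureReal_compl_le ?_
  have hcard : (Fintype.card ι : ℝ) * (δ / (2 * Fintype.card ι)) ≤ δ / 2 := by
    obtain hι | hι := eq_or_ne (Fintype.card ι : ℝ) 0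
    · simp only [hι, zero_mul]; positivity
    · exact le_of_eq (by field_simp)
  calc μ.real sᶜ ≤ μ.real (A ∪ ⋃ j, E j) := by
        refine measureReal_mono fun ω hω ↦ ?_
        by_contra hbad
        simp only [Set.mem_union, Set.mem_iUnion, not_or, not_exists] at hbad
        exact hω (hs ω hbad.1 hbad.2)
    _ ≤ δ / 2 + ∑ j, δ / (2 * Fintype.card ι) :=
        (measureReal_union_le _ _).trans (add_le_add hA
          ((measureReal_iUnion_fintype_le _).trans (sum_le_sum fun j _ ↦ hE j)))
    _ ≤ δ := by
        rw [sum_const, card_univ, nsmul_eq_mul]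
        linarith

end MeasureTheory

theorem stmt_13_general {Ω : Type*} [MeasurableSpace Ω] (μ : Measure Ω)
    [IsProbabilityMeasure μ]
    (N J : ℕ) (hN : 0 < N)
    (C : ℝ) (hC : 0 < C) (α : Fin J → ℝ) (σ : Fin J → ℝ) (hσ : ∀ j, 0 < σ j)
    (δ : ℝ) (hδ : δ ∈ Set.Ioo (0 : ℝ) 1)
    (r : Fin N → Ω → ℝ) (ε : Fin N → Fin J → Ω → ℝ)
    (hrmeas : ∀ i, Measurable (r i))
    (hindep : iIndepFun
      (Sum.elim r (fun (p : Fin N × Fin J) => ε p.1 p.2)) μ)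
    (hrbdd : ∀ i ω, r i ω ∈ Set.Icc 0 C)
    (rbar : ℝ) (hrmean : ∀ i, ∫ ω, r i ω ∂μ = rbar)
    (hεint : ∀ i j (t : ℝ), Integrable (fun ω => Real.exp (t * ε i j ω)) μ)
    (hεmgf : ∀ i j (t : ℝ),
      ∫ ω, Real.exp (t * ε i j ω) ∂μ ≤ Real.exp ((σ j) ^ 2 * t ^ 2 / 2))
    (αhat : Fin J → Ω → ℝ)
    (hαhat : ∀ j ω, αhat j ω = (1 / N) * ∑ i, (α j * r i ω + ε i j ω)) :
    ENNReal.ofReal (1 - δ) ≤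
      μ {ω | Real.sqrt (∑ j, (αhat j ω - rbar * α j) ^ 2) ≤
        (Real.sqrt (∑ j, (α j) ^ 2) * C * Real.sqrt (Real.log (4 / δ) / 2) +
          Real.sqrt (∑ j, (σ j) ^ 2) * Real.sqrt (2 * Real.log (4 * J / δ))) /
            Real.sqrt N} := by
  obtain ⟨hδ, -⟩ := hδ
  have : Nonempty (Fin N) := ⟨⟨0, hN⟩⟩
  set x : Ω → ℝ := fun ω ↦ (N : ℝ)⁻¹ * ∑ i, (r i ω - rbar)
  set y : Fin J → Ω → ℝ := fun j ω ↦ (N : ℝ)⁻¹ * ∑ i, ε i j ω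
  set B := C * √(log (4 / δ) / 2) / √N
  set K := √(2 * log (4 * J / δ)) / √N
  have hx : μ.real {ω | B ≤ |x ω|} ≤ δ / 2 := by
    have h := measure_abs_average_sub_ge_le_of_mem_Icc (hindep.precomp Sum.inl_injective)
      (fun i ↦ (hrmeas i).aemeasurable) hC (fun i ↦ ae_of_all _ (hrbdd i)) hrmean
      (half_pos hδ)
    rw [show 2 / (δ / 2) = 4 / δ by ring] at h
    simpa only [Fintype.card_fin, sub_zero, Sum.elim_inl] using h
  have hy (j : Fin J) : μ.real {ω | σ j * K ≤ |y j ω|} ≤ δ / (2 * J) := by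
    have hJ : (0 : ℝ) < J := Nat.cast_pos.mpr (Fin.pos j)
    have h_subG (i : Fin N) : HasSubgaussianMGF (ε i j) (‖σ j‖₊ ^ 2) μ :=
      ⟨hεint i j, fun t ↦ by simpa [mgf] using hεmgf i j t⟩
    have h := measure_abs_average_ge_le_of_iIndepFun
      (hindep.precomp (g := fun i ↦ Sum.inr (i, j)) fun i i' h ↦ by simpa using h)
      (hσ j) h_subG (by positivity : 0 < δ / (2 * J))
    rw [show 2 / (δ / (2 * J)) = 4 * J / δ by field_simp; ring] at h
    simpa only [Fintype.card_fin, mul_div_assoc (σ j), Sum.elim_inr] using h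
  refine ofReal_one_sub_le_of_forall_notMem (E := fun j ↦ {ω | σ j * K ≤ |y j ω|}) hδ.le hx
    (by simpa using hy) fun ω hxω hyω ↦ ?_
  simp only [Set.mem_ofPred_eq, not_le] at hxω hyω ⊢
  have hdecomp (j : Fin J) : αhat j ω - rbar * α j = α j * x ω + y j ω := by
    simpa only [hαhat, Fintype.card_fin] using average_mul_add_sub_eq (α j) rbar (r · ω) (ε · j ω)
  simp_rw [hdecomp]
  refine (sqrt_sum_sq_mul_add_le α σ _ hxω.le (by positivity) fun j ↦ (hyω j).le).trans_eq ?_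
  ring

/-- Concentration of the ESAG estimator (Lemma E.1): averaging the observed
evaluation vectors `α_j r_i + ε_{i,j}` over `N` i.i.d. bounded rewards and
independent sub-Gaussian noises concentrates around `r̄·α` at the rate
`(‖α‖₂ C √(ln(4/δ)/2) + ‖σ‖₂ √(2 ln(4J/δ)))/√N`. -/
theorem stmt_13 {Ω : Type*} [MeasurableSpace Ω] (μ : Measure Ω)
    [IsProbabilityMeasure μ]
    (N J : ℕ) (hN : 0 < N) (hJ : 0 < J)
    (C : ℝ) (hC : 0 < C) (α : Fin J → ℝ) (σ : Fin J → ℝ) (hσ : ∀ j, 0 < σ j)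
    (δ : ℝ) (hδ : δ ∈ Set.Ioo (0 : ℝ) 1)
    (r : Fin N → Ω → ℝ) (ε : Fin N → Fin J → Ω → ℝ)
    (hrmeas : ∀ i, Measurable (r i)) (hεmeas : ∀ i j, Measurable (ε i j))
    (hindep : iIndepFun
      (Sum.elim r (fun (p : Fin N × Fin J) => ε p.1 p.2)) μ)
    (hrbdd : ∀ i ω, r i ω ∈ Set.Icc 0 C)
    (hident : ∀ i i' : Fin N, Measure.map (r i) μ = Measure.map (r i') μ)
    (rbar : ℝ) (hrmean : ∀ i, ∫ ω, r i ω ∂μ = rbar)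
    (hεmean : ∀ i j, ∫ ω, ε i j ω ∂μ = 0)
    (hεint : ∀ i j (t : ℝ), Integrable (fun ω => Real.exp (t * ε i j ω)) μ)
    (hεmgf : ∀ i j (t : ℝ),
      ∫ ω, Real.exp (t * ε i j ω) ∂μ ≤ Real.exp ((σ j) ^ 2 * t ^ 2 / 2))
    (αhat : Fin J → Ω → ℝ)
    (hαhat : ∀ j ω, αhat j ω = (1 / N) * ∑ i, (α j * r i ω + ε i j ω)) :
    ENNReal.ofReal (1 - δ) ≤
      μ {ω | Real.sqrt (∑ j, (αhat j ω - rbar * α j) ^ 2) ≤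
        (Real.sqrt (∑ j, (α j) ^ 2) * C * Real.sqrt (Real.log (4 / δ) / 2) +
          Real.sqrt (∑ j, (σ j) ^ 2) * Real.sqrt (2 * Real.log (4 * J / δ))) /
            Real.sqrt N} :=
  stmt_13_general μ N J hN C hC α σ hσ δ hδ r ε hrmeas hindep hrbdd rbar hrmean hεint hεmgf αhat
    hαhat
end

section
/- Let n ≥ 2 and J ≥ 1 be integers and σ₀ > 0. Then there exists δ > 0, depending only on n, J and σ₀, such that for every measurable function 𝔄 : ℝ^{n×J} → {1,…,n} the following holds: if r_1,…,r_n are i.i.d. Bernoulli(1/2) random variables, (ε_{i,j})_{i≤n,j≤J} are i.i.d. Gaussian N(0, σ₀²) random variables independent of the rewards, and f_{i,j} = r_i + ε_{i,j}, then the probability that the set I⋆ = {i : r_i = 1} is nonempty and 𝔄((f_{i,j})_{i,j}) ∉ I⋆ is at least δ. -/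
/-!
Look at the two reward patterns in which exactly one arm, `a₁` resp. `a₂`, is optimal; each has
probability `2⁻ⁿ`. Under either pattern the observations are Gaussian with means in `[0, 1]`, so
their law dominates `c • Lebesgue` on the box `[-1, 1]^(n × J)`, where `c` is the `N(0, σ₀²)`
density at `2`. The rule cannot return both `a₁` and `a₂`, so the two failure events cover the
box between them, and `δ = 2⁻ⁿ (2c)^(nJ)` works.
-/

open MeasureTheory ProbabilityTheory
open scoped ENNReal NNReal

namespace MeasureTheory.Measure

theorem tprod_mono {δ : Type*} {X : δ → Type*} [∀ i, MeasurableSpace (X i)]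
    {μ ν : ∀ i, Measure (X i)} [∀ i, SigmaFinite (μ i)] [∀ i, SigmaFinite (ν i)]
    (h : ∀ i, μ i ≤ ν i) (l : List δ) : Measure.tprod l μ ≤ Measure.tprod l ν := by
  induction l with
  | nil => exact le_rfl
  | cons i l ih =>
    rw [tprod_cons, tprod_cons]
    exact prod_mono (h i) ih

theorem pi_mono {ι : Type*} [Fintype ι] {X : ι → Type*} [∀ i, MeasurableSpace (X i)]
    {μ ν : ∀ i, Measure (X i)} [∀ i, SigmaFinite (μ i)] [∀ i, SigmaFinite (ν i)]
    (h : ∀ i, μ i ≤ ν i) : Measure.pi μ ≤ Measure.pi ν := by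
  classical
  let _ : Encodable ι := Fintype.toEncodable ι
  rw [← pi'_eq_pi, ← pi'_eq_pi]
  exact map_mono (tprod_mono h _) (measurable_tProd_elim' Encodable.mem_sortedUniv)

instance isFiniteMeasure_ofReal_smul {α : Type*} [MeasurableSpace α] {μ : Measure α}
    [IsFiniteMeasure μ] (x : ℝ) : IsFiniteMeasure (ENNReal.ofReal x • μ) :=
  ⟨ENNReal.mul_lt_top ENNReal.ofReal_lt_top (measure_lt_top μ _)⟩

end MeasureTheory.Measure

namespace ProbabilityTheory

lemma smul_restrict_Icc_le_gaussianReal (m : ℝ) {v : ℝ≥0} (hv : v ≠ 0) (R : ℝ) :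
    ENNReal.ofReal (gaussianPDFReal 0 v R) • volume.restrict (Set.Icc (m - R) (m + R)) ≤
      gaussianReal m v := by
  rw [gaussianReal_of_var_ne_zero _ hv, ← withDensity_const,
    ← withDensity_indicator measurableSet_Icc]
  refine withDensity_mono (ae_of_all _ fun x => ?_)
  by_cases hx : x ∈ Set.Icc (m - R) (m + R)
  · rw [Set.indicator_of_mem hx]
    have hxR : (x - m) ^ 2 ≤ (R - 0) ^ 2 := by
      rw [Set.mem_Icc] at hx
      nlinarith
    refine ENNReal.ofReal_le_ofReal ?_
    unfold gaussianPDFReal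
    gcongr
  · simp [Set.indicator_of_notMem hx]

lemma pi_smul_restrict_le_map_add_pi_gaussianReal {ι : Type*} [Fintype ι] {v : ℝ≥0}
    (hv : v ≠ 0) {m : ι → ℝ} (hm : ∀ i, |m i| ≤ 1) :
    Measure.pi (fun _ : ι => ENNReal.ofReal (gaussianPDFReal 0 v 2) •
        volume.restrict (Set.Icc (-1 : ℝ) 1)) ≤
      (Measure.pi fun _ : ι => gaussianReal 0 v).map (m + ·) := by
  rw [show (m + ·) = fun x i => m i + x i from rfl, Measure.pi_map_pi fun _ => by fun_prop]
  simp_rw [gaussianReal_map_const_add, zero_add]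
  refine Measure.pi_mono fun i => le_trans ?_ (smul_restrict_Icc_le_gaussianReal (m i) hv 2)
  gcongr <;> linarith [abs_le.1 (hm i)]

lemma map_prodMk_eq_prod_pi_of_iIndepFun {Ω ι κ 𝓧 : Type*} [Fintype ι] [Fintype κ]
    [MeasurableSpace Ω] [MeasurableSpace 𝓧] {μ : Measure Ω} [IsProbabilityMeasure μ]
    {X : ι → Ω → 𝓧} {Y : κ → Ω → 𝓧} (hX : ∀ i, Measurable (X i)) (hY : ∀ k, Measurable (Y k))
    (h : iIndepFun (Sum.elim X Y) μ) :
    μ.map (fun ω => (fun i => X i ω, fun k => Y k ω)) =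
      (Measure.pi fun i => μ.map (X i)).prod (Measure.pi fun k => μ.map (Y k)) := by
  have hXY : ∀ s, Measurable (Sum.elim X Y s) := Sum.forall.2 ⟨hX, hY⟩
  have hjoint := (iIndepFun_iff_map_fun_eq_pi_map fun s => (hXY s).aemeasurable).1 h
  have hsplit := (measurePreserving_sumPiEquivProdPi fun s => μ.map (Sum.elim X Y s)).map_eq
  rw [← hjoint, Measure.map_map (MeasurableEquiv.measurable _)
    (measurable_pi_lambda _ hXY)] at hsplit
  exact hsplit

end ProbabilityTheory

noncomputable def bernoulliHalf : Measure ℝ :=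
  (1 / 2 : ℝ≥0∞) • Measure.dirac 0 + (1 / 2 : ℝ≥0∞) • Measure.dirac 1

instance : IsProbabilityMeasure bernoulliHalf :=
  ⟨by simp [bernoulliHalf, ENNReal.inv_two_add_inv_two]⟩

lemma pi_bernoulliHalf_single {α : Type*} [Fintype α] [DecidableEq α] (a : α) :
    Measure.pi (fun _ : α => bernoulliHalf) {Pi.single a 1} = (1 / 2) ^ Fintype.card α := by
  rw [← Set.univ_pi_singleton, Measure.pi_pi, ← Finset.card_univ, ← Finset.prod_const]
  refine Finset.prod_congr rfl fun i _ => ?_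
  rcases eq_or_ne i a with rfl | h <;> simp [bernoulliHalf, *]

section Selection

variable {α ι : Type*} [DecidableEq α] {𝔄 : (α → ι → ℝ) → α}

def singleArmFailure (𝔄 : (α → ι → ℝ) → α) (a : α) : Set ((α → ℝ) × (α × ι → ℝ)) :=
  {Pi.single a (1 : ℝ)} ×ˢ {g | 𝔄 (fun i j => (Pi.single a 1 : α → ℝ) i + g (i, j)) ≠ a}

lemma singleArmFailure_subset (a : α) :
    singleArmFailure 𝔄 a ⊆
      {p | (∃ i, p.1 i = 1) ∧ p.1 (𝔄 fun i j => p.1 i + p.2 (i, j)) ≠ 1} := by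
  rintro ⟨x, g⟩ ⟨rfl : x = Pi.single a (1 : ℝ), hg : 𝔄 _ ≠ a⟩
  exact ⟨⟨a, Pi.single_eq_same a 1⟩, by simpa [Pi.single_apply] using hg⟩

lemma measurableSet_singleArmFailure [Countable α] [MeasurableSpace α]
    [MeasurableSingletonClass α] (h𝔄 : Measurable 𝔄) (a : α) :
    MeasurableSet (singleArmFailure 𝔄 a) :=
  (measurableSet_singleton _).prod ((h𝔄.comp (by fun_prop)) (measurableSet_singleton a).compl)

lemma measure_pi_misselect_le_pi_gaussianReal [Fintype α] [MeasurableSpace α]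
    [MeasurableSingletonClass α] [Fintype ι] (h𝔄 : Measurable 𝔄) {v : ℝ≥0} (hv : v ≠ 0) (a : α) :
    Measure.pi (fun _ : α × ι => ENNReal.ofReal (gaussianPDFReal 0 v 2) •
        volume.restrict (Set.Icc (-1 : ℝ) 1)) {h | 𝔄 (fun i j => h (i, j)) ≠ a} ≤
      Measure.pi (fun _ : α × ι => gaussianReal 0 v)
        {g | 𝔄 (fun i j => (Pi.single a 1 : α → ℝ) i + g (i, j)) ≠ a} := by
  have hmisselect : MeasurableSet {h : α × ι → ℝ | 𝔄 (fun i j => h (i, j)) ≠ a} :=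
    (h𝔄.comp (by fun_prop)) (measurableSet_singleton a).compl
  have hshift : ∀ p : α × ι, |(Pi.single a 1 : α → ℝ) p.1| ≤ 1 := fun p => by
    rcases eq_or_ne p.1 a with h | h <;> simp [h]
  exact (Measure.le_iff'.1 (pi_smul_restrict_le_map_add_pi_gaussianReal hv hshift) _).trans_eq
    (Measure.map_apply (by fun_prop) hmisselect)

lemma le_prod_pi_singleArmFailure_union [Fintype α] [MeasurableSpace α]
    [MeasurableSingletonClass α] [Fintype ι] (h𝔄 : Measurable 𝔄) {v : ℝ≥0} (hv : v ≠ 0)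
    {a₁ a₂ : α} (hne : a₁ ≠ a₂) :
    (1 / 2) ^ Fintype.card α *
        (ENNReal.ofReal (gaussianPDFReal 0 v 2) * 2) ^ Fintype.card (α × ι) ≤
      ((Measure.pi fun _ : α => bernoulliHalf).prod
        (Measure.pi fun _ : α × ι => gaussianReal 0 v))
        (singleArmFailure 𝔄 a₁ ∪ singleArmFailure 𝔄 a₂) := by
  set ν := Measure.pi (fun _ : α × ι => ENNReal.ofReal (gaussianPDFReal 0 v 2) •
    volume.restrict (Set.Icc (-1 : ℝ) 1))
  have hν :
      ν Set.univ = (ENNReal.ofReal (gaussianPDFReal 0 v 2) * 2) ^ Fintype.card (α × ι) := by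
    rw [← Set.pi_univ, Measure.pi_pi]
    norm_num
  have hcover : ν Set.univ ≤ ν {h | 𝔄 (fun i j => h (i, j)) ≠ a₁} +
      ν {h | 𝔄 (fun i j => h (i, j)) ≠ a₂} := by
    refine (measure_mono fun h _ => ?_).trans (measure_union_le _ _)
    by_cases h₁ : 𝔄 (fun i j => h (i, j)) = a₁
    · exact Or.inr (h₁.trans_ne hne)
    · exact Or.inl h₁
  have hdisj : Disjoint (singleArmFailure 𝔄 a₁) (singleArmFailure 𝔄 a₂) := by
    refine Set.disjoint_prod.2 (Or.inl (Set.disjoint_singleton.2 fun h => ?_))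
    simpa [hne] using congrFun h a₁
  rw [measure_union hdisj (measurableSet_singleArmFailure h𝔄 a₂), singleArmFailure,
    singleArmFailure, Measure.prod_prod, Measure.prod_prod, pi_bernoulliHalf_single,
    pi_bernoulliHalf_single, ← hν, mul_comm, mul_comm _ (_ ^ _), ← mul_add]
  gcongr
  exact hcover.trans (add_le_add (measure_pi_misselect_le_pi_gaussianReal h𝔄 hv a₁)
    (measure_pi_misselect_le_pi_gaussianReal h𝔄 hv a₂))

end Selection

theorem stmt_16_general (n J : ℕ) (hn : 2 ≤ n) (σ₀ : ℝ) (hσ₀ : 0 < σ₀) :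
    ∃ δ : ℝ, 0 < δ ∧
      ∀ (Ω : Type*) (_ : MeasurableSpace Ω) (μ : Measure Ω),
        IsProbabilityMeasure μ →
        ∀ (𝔄 : (Fin n → Fin J → ℝ) → Fin n), Measurable 𝔄 →
        ∀ (r : Fin n → Ω → ℝ) (ε : Fin n → Fin J → Ω → ℝ),
          (∀ i, Measurable (r i)) → (∀ i j, Measurable (ε i j)) →
          iIndepFun (β := fun _ : Fin n ⊕ (Fin n × Fin J) => ℝ)
            (Sum.elim r fun p => ε p.1 p.2) μ →
          (∀ i, Measure.map (r i) μ =
            (1 / 2 : ENNReal) • Measure.dirac (0 : ℝ) +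
              (1 / 2 : ENNReal) • Measure.dirac (1 : ℝ)) →
          (∀ i j, Measure.map (ε i j) μ =
            gaussianReal 0 (⟨σ₀ ^ 2, sq_nonneg σ₀⟩ : NNReal)) →
          ENNReal.ofReal δ ≤
            μ {ω | (∃ i, r i ω = 1) ∧
              r (𝔄 (fun i j => r i ω + ε i j ω)) ω ≠ 1} := by
  set v : ℝ≥0 := ⟨σ₀ ^ 2, sq_nonneg σ₀⟩
  have hv : v ≠ 0 := by
    rw [Ne, ← NNReal.coe_eq_zero]
    exact (pow_pos hσ₀ 2).ne'
  have hc := gaussianPDFReal_pos 0 v 2 hv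
  refine ⟨(1 / 2) ^ n * (gaussianPDFReal 0 v 2 * 2) ^ (n * J), by positivity, ?_⟩
  intro Ω _ μ _ 𝔄 h𝔄 r ε hr hε hind hr_law hε_law
  obtain ⟨a₁, a₂, hne⟩ := (Fin.nontrivial_iff_two_le.2 hn).exists_pair_ne
  set X : Ω → (Fin n → ℝ) × (Fin n × Fin J → ℝ) :=
    fun ω => (fun i => r i ω, fun p => ε p.1 p.2 ω) with hX
  have hlaw : μ.map X = (Measure.pi fun _ => bernoulliHalf).prod
      (Measure.pi fun _ => gaussianReal 0 v) := by
    rw [hX, map_prodMk_eq_prod_pi_of_iIndepFun hr (fun p : Fin n × Fin J => hε p.1 p.2) hind]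
    simp_rw [hr_law, hε_law]
    rfl
  have hF :=
    (measurableSet_singleArmFailure h𝔄 a₁).union (measurableSet_singleArmFailure h𝔄 a₂)
  calc ENNReal.ofReal ((1 / 2) ^ n * (gaussianPDFReal 0 v 2 * 2) ^ (n * J))
      = (1 / 2) ^ Fintype.card (Fin n) *
          (ENNReal.ofReal (gaussianPDFReal 0 v 2) * 2) ^ Fintype.card (Fin n × Fin J) := by
        simp [ENNReal.ofReal_mul, ENNReal.ofReal_pow, ENNReal.inv_pow, hc.le]
    _ ≤ μ.map X (singleArmFailure 𝔄 a₁ ∪ singleArmFailure 𝔄 a₂) :=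
        hlaw ▸ le_prod_pi_singleArmFailure_union h𝔄 hv hne
    _ = μ (X ⁻¹' (singleArmFailure 𝔄 a₁ ∪ singleArmFailure 𝔄 a₂)) :=
        Measure.map_apply (by fun_prop) hF
    _ ≤ _ := measure_mono (Set.preimage_mono
        (Set.union_subset (singleArmFailure_subset a₁) (singleArmFailure_subset a₂)))

/-- Impossibility result (Lemma A.1): for Bernoulli(1/2) rewards observed
through i.i.d. Gaussian noise of level `σ₀`, there is a `δ > 0`, depending only
on `n`, `J` and `σ₀`, such that every measurable selection rule fails to return
an optimal arm (while an optimal arm exists) with probability at least `δ`. -/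
theorem stmt_16 (n J : ℕ) (hn : 2 ≤ n) (hJ : 1 ≤ J) (σ₀ : ℝ) (hσ₀ : 0 < σ₀) :
    ∃ δ : ℝ, 0 < δ ∧
      ∀ (Ω : Type*) (_ : MeasurableSpace Ω) (μ : Measure Ω),
        IsProbabilityMeasure μ →
        ∀ (𝔄 : (Fin n → Fin J → ℝ) → Fin n), Measurable 𝔄 →
        ∀ (r : Fin n → Ω → ℝ) (ε : Fin n → Fin J → Ω → ℝ),
          (∀ i, Measurable (r i)) → (∀ i j, Measurable (ε i j)) →
          iIndepFun (β := fun _ : Fin n ⊕ (Fin n × Fin J) => ℝ)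
            (Sum.elim r fun p => ε p.1 p.2) μ →
          (∀ i, Measure.map (r i) μ =
            (1 / 2 : ENNReal) • Measure.dirac (0 : ℝ) +
              (1 / 2 : ENNReal) • Measure.dirac (1 : ℝ)) →
          (∀ i j, Measure.map (ε i j) μ =
            gaussianReal 0 (⟨σ₀ ^ 2, sq_nonneg σ₀⟩ : NNReal)) →
          ENNReal.ofReal δ ≤
            μ {ω | (∃ i, r i ω = 1) ∧
              r (𝔄 (fun i j => r i ω + ε i j ω)) ω ≠ 1} :=
  stmt_16_general n J hn σ₀ hσ₀
end
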